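/- arXiv:1511.01821 — 6 statements merged into one kernel-verified Lean document; each statement's English description precedes it below -/
import Mathlib

section
/- Fix a constant L > 0, a finite nonempty index set N with |N| = m, and admissible functions h_i : ℝ → ℝ for i ∈ N. Let β be a real number with β ≤ 1/m and let γ be a natural number with γ ≤ m. Then the set X(β,γ) is convex and closed. -/
/-- A function `h : ℝ → ℝ` is admissible with constant `L > 0` if it is convex,
continuously differentiable, its derivative is bounded by `L` and `L`-Lipschitz,
and its set of unconstrained global minimizers is nonempty and compact. -/
def Admissible (L : ℝ) (h : ℝ → ℝ) : Prop :=
  ConvexOn ℝ Set.univ h ∧ ContDiff ℝ 1 h ∧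
    (∀ x : ℝ, |deriv h x| ≤ L) ∧ LipschitzWith L.toNNReal (deriv h) ∧
    {x : ℝ | ∀ y : ℝ, h x ≤ h y}.Nonempty ∧ IsCompact {x : ℝ | ∀ y : ℝ, h x ≤ h y}

/-- A weight vector `α` over the index set `N` is `(β,γ)`-valid if all weights
are nonnegative, they sum to `1`, and at least `γ` indices in `N` have weight
at least `β`. -/
def ValidWeight {ι : Type*} (N : Finset ι) (β : ℝ) (γ : ℕ) (α : ι → ℝ) : Prop :=
  (∀ i ∈ N, 0 ≤ α i) ∧ (∑ i ∈ N, α i = 1) ∧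
    ∃ S ⊆ N, γ ≤ S.card ∧ ∀ i ∈ S, β ≤ α i

/-- `X(β,γ)`: the union over all `(β,γ)`-valid weight vectors `α` of the set of
unconstrained global minimizers of `x ↦ ∑_{i∈N} α_i h_i(x)`. -/
def XSet {ι : Type*} (N : Finset ι) (h : ι → ℝ → ℝ) (β : ℝ) (γ : ℕ) : Set ℝ :=
  {x : ℝ | ∃ α : ι → ℝ, ValidWeight N β γ α ∧
    ∀ y : ℝ, ∑ i ∈ N, α i * h i x ≤ ∑ i ∈ N, α i * h i y}

/-! For nonnegative weights `α`, the function `∑ i ∈ N, α i * h i` is differentiable with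
nondecreasing derivative `D_x(α) = ∑ i ∈ N, α i * (h i)' x`, so its minimizers are exactly the
zeros of `x ↦ D_x(α)`. Given `x ≤ z ≤ y` minimizing the sums for valid `α` and `α'`, we get
`D_z(α) ≥ 0 ≥ D_z(α')`. The uniform weight `u = 1/m` is at least `β` on all of `N`, so one of
`α`, `α'` has `D_z` of sign opposite to `D_z(u)`; moving it along the segment towards `u` keeps
its set of large weights and reaches a valid weight with `D_z = 0`, by linearity of `D_z`.
Thus `X(β,γ)` is an interval. It is closed as the projection to `ℝ` of a closed set of pairs
(weight, minimizer) whose weights range over a compact set. -/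

open Set Filter Topology

theorem isMinOn_univ_iff_of_hasDerivAt_of_monotone {f f' : ℝ → ℝ}
    (hf : ∀ x, HasDerivAt f (f' x) x) (hf' : Monotone f') {x : ℝ} :
    IsMinOn f univ x ↔ f' x = 0 := by
  have hderiv : deriv f = f' := funext fun y => (hf y).deriv
  have hconv : ConvexOn ℝ univ f :=
    Monotone.convexOn_univ_of_deriv (fun y => (hf y).differentiableAt) (hderiv ▸ hf')
  refine ⟨fun hmin => (hmin.isLocalMin univ_mem).hasDerivAt_eq_zero (hf x), fun h0 => ?_⟩
  refine hconv.isMinOn_of_rightDeriv_eq_zero (by simp) ?_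
  rw [(hf x).hasDerivWithinAt.derivWithin (uniqueDiffWithinAt_Ioi x), h0]

theorem IsCompact.isClosed_image_snd {X Y : Type*} [TopologicalSpace X] [TopologicalSpace Y]
    {K : Set X} (hK : IsCompact K) {s : Set (X × Y)} (hs : IsClosed s) (hsK : s ⊆ K ×ˢ univ) :
    IsClosed (Prod.snd '' s) := by
  have : CompactSpace K := isCompact_iff_compactSpace.mp hK
  have himage : Prod.snd '' s = Prod.snd '' (Prod.map Subtype.val id ⁻¹' s : Set (K × Y)) := by
    ext y
    constructor
    · rintro ⟨⟨x, y⟩, hxy, rfl⟩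
      exact ⟨(⟨x, (hsK hxy).1⟩, y), hxy, rfl⟩
    · rintro ⟨⟨x, y⟩, hxy, rfl⟩
      exact ⟨(x.1, y), hxy, rfl⟩
  rw [himage]
  exact isClosedMap_snd_of_compactSpace _ (hs.preimage (by fun_prop))

section

variable {ι : Type*} {N : Finset ι} {β : ℝ} {γ : ℕ}

theorem exists_mem_segment_sum_mul_eq_zero {α u c : ι → ℝ}
    (h0 : (0 : ℝ) ∈ uIcc (∑ i ∈ N, α i * c i) (∑ i ∈ N, u i * c i)) :
    ∃ w ∈ segment ℝ α u, ∑ i ∈ N, w i * c i = 0 := by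
  rw [← segment_eq_uIcc] at h0
  obtain ⟨a, b, ha, hb, hab, hzero⟩ := h0
  refine ⟨a • α + b • u, ⟨a, b, ha, hb, hab, rfl⟩, ?_⟩
  simpa only [Pi.add_apply, Pi.smul_apply, smul_eq_mul, add_mul, Finset.sum_add_distrib, mul_assoc,
    ← Finset.mul_sum] using hzero

theorem ValidWeight.congr {α α' : ι → ℝ} (hα : ValidWeight N β γ α) (h : ∀ i ∈ N, α i = α' i) :
    ValidWeight N β γ α' := by
  obtain ⟨h0, h1, S, hSN, hcard, hS⟩ := hα
  exact ⟨fun i hi => h i hi ▸ h0 i hi, (Finset.sum_congr rfl h).symm.trans h1, S, hSN, hcard,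
    fun i hi => h i (hSN hi) ▸ hS i hi⟩

theorem ValidWeight.nonempty {α : ι → ℝ} (hα : ValidWeight N β γ α) : N.Nonempty :=
  Finset.nonempty_of_sum_ne_zero (hα.2.1 ▸ one_ne_zero)

theorem ValidWeight.le_one {α : ι → ℝ} (hα : ValidWeight N β γ α) {i : ι} (hi : i ∈ N) :
    α i ≤ 1 :=
  hα.2.1 ▸ Finset.single_le_sum hα.1 hi

theorem validWeight_of_mem_segment {α u w : ι → ℝ} (hα : ValidWeight N β γ α)
    (hu₀ : ∀ i ∈ N, 0 ≤ u i) (hu₁ : ∑ i ∈ N, u i = 1) (huβ : ∀ i ∈ N, β ≤ u i)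
    (hw : w ∈ segment ℝ α u) : ValidWeight N β γ w := by
  obtain ⟨hα₀, hα₁, S, hSN, hcard, hSβ⟩ := hα
  obtain ⟨a, b, ha, hb, hab, rfl⟩ := hw
  refine ⟨fun i hi => ?_, ?_, S, hSN, hcard, fun i hi => ?_⟩
  · have := hα₀ i hi; have := hu₀ i hi
    simp only [Pi.add_apply, Pi.smul_apply, smul_eq_mul]
    positivity
  · simp only [Pi.add_apply, Pi.smul_apply, smul_eq_mul, Finset.sum_add_distrib, ← Finset.mul_sum,
      hα₁, hu₁, mul_one, hab]
  · simp only [Pi.add_apply, Pi.smul_apply, smul_eq_mul]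
    have := hSβ i hi; have := huβ i (hSN hi)
    calc β = a * β + b * β := by rw [← add_mul, hab, one_mul]
      _ ≤ a * α i + b * u i := by gcongr

theorem isClosed_setOf_validWeight : IsClosed {α : ι → ℝ | ValidWeight N β γ α} := by
  have hnonneg : IsClosed {α : ι → ℝ | ∀ i ∈ N, 0 ≤ α i} := by
    simp only [ofPred_forall]
    exact isClosed_biInter fun i _ => isClosed_le continuous_const (continuous_apply i)
  have hsum : IsClosed {α : ι → ℝ | ∑ i ∈ N, α i = 1} :=
    isClosed_eq (continuous_finsetSum _ fun i _ => continuous_apply i) continuous_const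
  have hlarge : IsClosed {α : ι → ℝ | ∃ S ⊆ N, γ ≤ S.card ∧ ∀ i ∈ S, β ≤ α i} := by
    have : {α : ι → ℝ | ∃ S ⊆ N, γ ≤ S.card ∧ ∀ i ∈ S, β ≤ α i} =
        ⋃ S ∈ {S | S ⊆ N ∧ γ ≤ S.card}, ⋂ i ∈ S, {α | β ≤ α i} := by
      ext; simp [and_assoc]
    rw [this]
    refine Finite.isClosed_biUnion ?_ fun S _ =>
      isClosed_biInter fun i _ => isClosed_le continuous_const (continuous_apply i)
    exact N.powerset.finite_toSet.subset fun S hS => Finset.mem_powerset.2 hS.1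
  simp only [ValidWeight, ofPred_and]
  exact hnonneg.inter (hsum.inter hlarge)

theorem isCompact_setOf_validWeight_supported :
    IsCompact {α : ι → ℝ | ValidWeight N β γ α ∧ ∀ i ∉ N, α i = 0} := by
  have hsupp : IsClosed {α : ι → ℝ | ∀ i ∉ N, α i = 0} := by
    simp only [ofPred_forall]
    exact isClosed_biInter fun i _ => isClosed_eq (continuous_apply i) continuous_const
  refine (isCompact_univ_pi fun _ => isCompact_Icc (a := (0 : ℝ)) (b := 1)).of_isClosed_subset
    (isClosed_setOf_validWeight.inter hsupp) ?_
  rintro α ⟨hα, hα₀⟩ i -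
  by_cases hi : i ∈ N
  · exact ⟨hα.1 i hi, hα.le_one hi⟩
  · rw [hα₀ i hi]
    exact ⟨le_rfl, zero_le_one⟩

variable {h : ι → ℝ → ℝ}

theorem hasDerivAt_weightedSum (hdiff : ∀ i ∈ N, Differentiable ℝ (h i)) (α : ι → ℝ) (x : ℝ) :
    HasDerivAt (fun y => ∑ i ∈ N, α i * h i y) (∑ i ∈ N, α i * deriv (h i) x) x :=
  HasDerivAt.fun_sum fun i hi => (hdiff i hi x).hasDerivAt.const_mul (α i)

theorem monotone_weightedSum_deriv (hconv : ∀ i ∈ N, ConvexOn ℝ univ (h i))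
    (hdiff : ∀ i ∈ N, Differentiable ℝ (h i)) {α : ι → ℝ} (hα : ∀ i ∈ N, 0 ≤ α i) :
    Monotone fun x => ∑ i ∈ N, α i * deriv (h i) x := fun _ _ hxy =>
  Finset.sum_le_sum fun i hi => mul_le_mul_of_nonneg_left
    ((hconv i hi).monotoneOn_deriv (fun z _ => hdiff i hi z) trivial trivial hxy) (hα i hi)

theorem mem_XSet_iff (hconv : ∀ i ∈ N, ConvexOn ℝ univ (h i))
    (hdiff : ∀ i ∈ N, Differentiable ℝ (h i)) {z : ℝ} :
    z ∈ XSet N h β γ ↔ ∃ α, ValidWeight N β γ α ∧ ∑ i ∈ N, α i * deriv (h i) z = 0 :=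
  exists_congr fun α => and_congr_right fun hα => isMinOn_univ_iff.symm.trans <|
    isMinOn_univ_iff_of_hasDerivAt_of_monotone (hasDerivAt_weightedSum hdiff α)
      (monotone_weightedSum_deriv hconv hdiff hα.1)

theorem ordConnected_XSet (hconv : ∀ i ∈ N, ConvexOn ℝ univ (h i))
    (hdiff : ∀ i ∈ N, Differentiable ℝ (h i)) (hβ : β ≤ (N.card : ℝ)⁻¹) :
    OrdConnected (XSet N h β γ) := by
  refine ⟨fun x hx y hy z ⟨hxz, hzy⟩ => ?_⟩
  rw [mem_XSet_iff hconv hdiff] at hx hy ⊢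
  obtain ⟨α, hα, hαx⟩ := hx
  obtain ⟨α', hα', hα'y⟩ := hy
  have hcard : (N.card : ℝ) ≠ 0 := by exact_mod_cast hα.nonempty.card_pos.ne'
  set u : ι → ℝ := fun _ => (N.card : ℝ)⁻¹
  have hu₀ : ∀ i ∈ N, 0 ≤ u i := fun _ _ => by positivity
  have hu₁ : ∑ i ∈ N, u i = 1 := by rw [Finset.sum_const, nsmul_eq_mul, mul_inv_cancel₀ hcard]
  have hαz : 0 ≤ ∑ i ∈ N, α i * deriv (h i) z :=
    hαx ▸ monotone_weightedSum_deriv hconv hdiff hα.1 hxz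
  have hα'z : ∑ i ∈ N, α' i * deriv (h i) z ≤ 0 :=
    hα'y ▸ monotone_weightedSum_deriv hconv hdiff hα'.1 hzy
  rcases le_or_gt (∑ i ∈ N, u i * deriv (h i) z) 0 with hu | hu
  · obtain ⟨w, hw, hwz⟩ := exists_mem_segment_sum_mul_eq_zero (mem_uIcc.2 (Or.inr ⟨hu, hαz⟩))
    exact ⟨w, validWeight_of_mem_segment hα hu₀ hu₁ (fun _ _ => hβ) hw, hwz⟩
  · obtain ⟨w, hw, hwz⟩ := exists_mem_segment_sum_mul_eq_zero (mem_uIcc.2 (Or.inl ⟨hα'z, hu.le⟩))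
    exact ⟨w, validWeight_of_mem_segment hα' hu₀ hu₁ (fun _ _ => hβ) hw, hwz⟩

theorem isClosed_XSet (hcont : ∀ i ∈ N, Continuous (h i)) : IsClosed (XSet N h β γ) := by
  classical
  set K := {α : ι → ℝ | ValidWeight N β γ α ∧ ∀ i ∉ N, α i = 0}
  set s := {p : (ι → ℝ) × ℝ | p.1 ∈ K ∧ ∀ y, ∑ i ∈ N, p.1 i * h i p.2 ≤ ∑ i ∈ N, p.1 i * h i y}
  have hmin_closed : IsClosed
      {p : (ι → ℝ) × ℝ | ∀ y, ∑ i ∈ N, p.1 i * h i p.2 ≤ ∑ i ∈ N, p.1 i * h i y} := by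
    simp only [ofPred_forall]
    refine isClosed_iInter fun y => isClosed_le ?_ ?_
    · exact continuous_finsetSum _ fun i hi =>
        ((continuous_apply i).comp continuous_fst).mul ((hcont i hi).comp continuous_snd)
    · exact continuous_finsetSum _ fun i _ =>
        ((continuous_apply i).comp continuous_fst).mul continuous_const
  have hs : IsClosed s :=
    (isCompact_setOf_validWeight_supported.isClosed.preimage continuous_fst).inter hmin_closed
  have hX : XSet N h β γ = Prod.snd '' s := by
    ext x
    constructor
    · rintro ⟨α, hα, hmin⟩
      set α₀ : ι → ℝ := fun i => if i ∈ N then α i else 0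
      have hα₀ : ∀ i ∈ N, α i = α₀ i := fun i hi => (if_pos hi).symm
      have hsum : ∀ y, ∑ i ∈ N, α₀ i * h i y = ∑ i ∈ N, α i * h i y := fun y =>
        Finset.sum_congr rfl fun i hi => by rw [hα₀ i hi]
      refine ⟨(α₀, x), ⟨⟨hα.congr hα₀, fun i hi => if_neg hi⟩, fun y => ?_⟩, rfl⟩
      rw [hsum, hsum]
      exact hmin y
    · rintro ⟨⟨α, x⟩, ⟨⟨hα, -⟩, hmin⟩, rfl⟩
      exact ⟨α, hα, hmin⟩
  rw [hX]
  exact isCompact_setOf_validWeight_supported.isClosed_image_snd hs fun p hp => ⟨hp.1, trivial⟩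

end

theorem XSet_convex_isClosed_general {ι : Type*} (L : ℝ)
    (N : Finset ι) (m : ℕ) (hm : N.card = m)
    (h : ι → ℝ → ℝ) (hadm : ∀ i ∈ N, Admissible L (h i))
    (β : ℝ) (hβ : β ≤ 1 / (m : ℝ)) (γ : ℕ) :
    Convex ℝ (XSet N h β γ) ∧ IsClosed (XSet N h β γ) := by
  have hconv : ∀ i ∈ N, ConvexOn ℝ univ (h i) := fun i hi => (hadm i hi).1
  have hdiff : ∀ i ∈ N, Differentiable ℝ (h i) := fun i hi =>
    (hadm i hi).2.1.differentiable one_ne_zero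
  have hβ' : β ≤ (N.card : ℝ)⁻¹ := by rwa [hm, ← one_div]
  exact ⟨(ordConnected_XSet hconv hdiff hβ').convex,
    isClosed_XSet fun i hi => (hdiff i hi).continuous⟩

/-- Lemma (convex B1): if `β ≤ 1/|N|` and `γ ≤ |N|`, the set `X(β,γ)` is
convex and closed. -/
theorem XSet_convex_isClosed {ι : Type*} (L : ℝ) (hL : 0 < L)
    (N : Finset ι) (hNne : N.Nonempty) (m : ℕ) (hm : N.card = m)
    (h : ι → ℝ → ℝ) (hadm : ∀ i ∈ N, Admissible L (h i))
    (β : ℝ) (hβ : β ≤ 1 / (m : ℝ)) (γ : ℕ) (hγ : γ ≤ m) :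
    Convex ℝ (XSet N h β γ) ∧ IsClosed (XSet N h β γ) :=
  XSet_convex_isClosed_general L N m hm h hadm β hβ γ
end

section
/- Fix a constant L > 0, a finite nonempty index set N with |N| = m, admissible functions h_i : ℝ → ℝ for i ∈ N, and a nonempty closed convex set 𝒳 ⊆ ℝ. Let β ≤ 1/m be a real number and γ ≤ m a natural number. If X(β,γ) ∩ 𝒳 ≠ ∅, then Y(β,γ) = X(β,γ) ∩ 𝒳. -/
/-- `Y(β,γ)`: the union over all `(β,γ)`-valid weight vectors `α` of the set of
minimizers over the constraint set `𝒳` of `x ↦ ∑_{i∈N} α_i h_i(x)`. -/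
def YSet {ι : Type*} (N : Finset ι) (h : ι → ℝ → ℝ) (X : Set ℝ) (β : ℝ) (γ : ℕ) : Set ℝ :=
  {x : ℝ | x ∈ X ∧ ∃ α : ι → ℝ, ValidWeight N β γ α ∧
    ∀ y ∈ X, ∑ i ∈ N, α i * h i x ≤ ∑ i ∈ N, α i * h i y}

/-!
A minimizer `x` of `∑ αᵢ hᵢ` over `𝒳` and a global minimizer `z ∈ 𝒳` of `∑ α'ᵢ hᵢ` give two
valid weights whose derivatives at `x`, paired with `z - x`, have opposite signs: the first by
first-order optimality on the convex set `𝒳`, the second by convexity. The uniform weight `1/m`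
has every coordinate `≥ β`, so mixing it into any valid weight keeps the weight valid; mixing it
into the one of `α, α'` whose derivative at `x` has the opposite sign to its own yields, by the
intermediate value theorem, a valid weight `v` with `(∑ vᵢ hᵢ)'(x) = 0`. By convexity `x` is then
a global minimizer of `∑ vᵢ hᵢ`.
-/

open Set

section Calculus

variable {f : ℝ → ℝ} {s : Set ℝ} {x y d : ℝ}

theorem ConvexOn.add_mul_sub_le_of_hasDerivAt (hf : ConvexOn ℝ s f) (hx : x ∈ s)
    (hy : y ∈ s) (hd : HasDerivAt f d x) : f x + d * (y - x) ≤ f y := by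
  rcases lt_trichotomy x y with hxy | rfl | hyx
  · have hslope := hf.le_slope_of_hasDerivAt hx hy hxy hd
    rw [slope_def_field, le_div_iff₀ (sub_pos.2 hxy)] at hslope
    linarith
  · simp
  · have hslope := hf.slope_le_of_hasDerivAt hy hx hyx hd
    rw [slope_def_field, div_le_iff₀ (sub_pos.2 hyx)] at hslope
    linarith

theorem IsMinOn.mul_sub_nonneg_of_hasDerivAt (hmin : IsMinOn f s x) (hs : Convex ℝ s)
    (hx : x ∈ s) (hy : y ∈ s) (hd : HasDerivAt f d x) : 0 ≤ d * (y - x) := by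
  simpa [mul_comm] using hmin.localize.hasFDerivWithinAt_nonneg
    hd.hasFDerivAt.hasFDerivWithinAt
    (sub_mem_posTangentConeAt_of_segment_subset (hs.segment_subset hx hy))

end Calculus

section Weights

variable {ι : Type*} {N : Finset ι} {β : ℝ} {γ : ℕ} {w u c : ι → ℝ}

theorem sum_mul_add_mul_sub_le {f : ι → ℝ → ℝ} {x : ℝ} (hw : ∀ i ∈ N, 0 ≤ w i)
    (hf : ∀ i ∈ N, ConvexOn ℝ univ (f i)) (hd : ∀ i ∈ N, HasDerivAt (f i) (c i) x)
    (y : ℝ) :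
    ∑ i ∈ N, w i * f i x + (∑ i ∈ N, w i * c i) * (y - x) ≤ ∑ i ∈ N, w i * f i y := by
  rw [Finset.sum_mul, ← Finset.sum_add_distrib]
  refine Finset.sum_le_sum fun i hi => ?_
  have := mul_le_mul_of_nonneg_left
    ((hf i hi).add_mul_sub_le_of_hasDerivAt (mem_univ x) (mem_univ y) (hd i hi)) (hw i hi)
  linarith

theorem ValidWeight.combo (hw : ValidWeight N β γ w) (hu₀ : ∀ i ∈ N, 0 ≤ u i)
    (hu₁ : ∑ i ∈ N, u i = 1) (huβ : ∀ i ∈ N, β ≤ u i) {t : ℝ} (ht₀ : 0 ≤ t)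
    (ht₁ : t ≤ 1) : ValidWeight N β γ (fun i => (1 - t) * w i + t * u i) := by
  obtain ⟨hw₀, hw₁, S, hSN, hcard, hSβ⟩ := hw
  refine ⟨fun i hi => ?_, ?_, S, hSN, hcard, fun i hi => ?_⟩
  · have := hw₀ i hi
    have := hu₀ i hi
    positivity
  · rw [Finset.sum_add_distrib, ← Finset.mul_sum, ← Finset.mul_sum, hw₁, hu₁]
    ring
  · nlinarith [hSβ i hi, huβ i (hSN hi)]

theorem ValidWeight.exists_combo_sum_mul_eq_zero (hw : ValidWeight N β γ w)
    (hu₀ : ∀ i ∈ N, 0 ≤ u i) (hu₁ : ∑ i ∈ N, u i = 1) (huβ : ∀ i ∈ N, β ≤ u i)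
    (hsign : (∑ i ∈ N, w i * c i) * (∑ i ∈ N, u i * c i) ≤ 0) :
    ∃ v, ValidWeight N β γ v ∧ ∑ i ∈ N, v i * c i = 0 := by
  set g : ℝ → ℝ := fun t => ∑ i ∈ N, ((1 - t) * w i + t * u i) * c i
  have hg : ContinuousOn g (uIcc 0 1) := by fun_prop
  have hzero : (0 : ℝ) ∈ uIcc (g 0) (g 1) := by
    simp only [g, sub_zero, one_mul, zero_mul, add_zero, sub_self, zero_add]
    exact mem_uIcc.2 ((mul_nonpos_iff.1 hsign).symm.imp id And.symm)
  obtain ⟨t, ht, hgt⟩ := intermediate_value_uIcc hg hzero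
  rw [uIcc_of_le zero_le_one] at ht
  exact ⟨_, hw.combo hu₀ hu₁ huβ ht.1 ht.2, hgt⟩

theorem ValidWeight.exists_sum_mul_eq_zero {w' : ι → ℝ} (hw : ValidWeight N β γ w)
    (hw' : ValidWeight N β γ w') (hβ : β ≤ 1 / (N.card : ℝ))
    (hsign : (∑ i ∈ N, w i * c i) * (∑ i ∈ N, w' i * c i) ≤ 0) :
    ∃ v, ValidWeight N β γ v ∧ ∑ i ∈ N, v i * c i = 0 := by
  have hN : (N.card : ℝ) ≠ 0 := Nat.cast_ne_zero.2 <| Finset.card_ne_zero.2 <|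
    Finset.nonempty_of_sum_ne_zero (hw.2.1.trans_ne one_ne_zero)
  set u : ι → ℝ := fun _ => 1 / (N.card : ℝ)
  have hu₀ : ∀ i ∈ N, 0 ≤ u i := fun _ _ => by positivity
  have hu₁ : ∑ i ∈ N, u i = 1 := by simp [u, hN]
  have huβ : ∀ i ∈ N, β ≤ u i := fun _ _ => hβ
  by_cases h : (∑ i ∈ N, w i * c i) * (∑ i ∈ N, u i * c i) ≤ 0
  · exact hw.exists_combo_sum_mul_eq_zero hu₀ hu₁ huβ h
  · refine hw'.exists_combo_sum_mul_eq_zero hu₀ hu₁ huβ ?_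
    nlinarith [sq_nonneg (∑ i ∈ N, u i * c i)]

end Weights

theorem YSet_eq_XSet_inter_general {ι : Type*} (L : ℝ)
    (N : Finset ι) (m : ℕ) (hm : N.card = m)
    (h : ι → ℝ → ℝ) (hadm : ∀ i ∈ N, Admissible L (h i))
    (X : Set ℝ) (hXconv : Convex ℝ X)
    (β : ℝ) (hβ : β ≤ 1 / (m : ℝ)) (γ : ℕ)
    (hint : (XSet N h β γ ∩ X).Nonempty) :
    YSet N h X β γ = XSet N h β γ ∩ X := by
  subst hm
  refine Subset.antisymm ?_ fun x ⟨⟨α, hα, hmin⟩, hxX⟩ =>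
    ⟨hxX, α, hα, fun y _ => hmin y⟩
  rintro x ⟨hxX, α, hα, hmin⟩
  refine ⟨?_, hxX⟩
  obtain ⟨z, ⟨α', hα', hzmin⟩, hzX⟩ := hint
  rcases eq_or_ne z x with rfl | hzx
  · exact ⟨α', hα', hzmin⟩
  have hconv : ∀ i ∈ N, ConvexOn ℝ univ (h i) := fun i hi => (hadm i hi).1
  have hd : ∀ i ∈ N, HasDerivAt (h i) (deriv (h i) x) x := fun i hi =>
    ((hadm i hi).2.1.differentiable one_ne_zero x).hasDerivAt
  set a := ∑ i ∈ N, α i * deriv (h i) x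
  set a' := ∑ i ∈ N, α' i * deriv (h i) x
  have ha : 0 ≤ a * (z - x) :=
    (isMinOn_iff.2 hmin).mul_sub_nonneg_of_hasDerivAt hXconv hxX hzX
      (HasDerivAt.fun_sum fun i hi => (hd i hi).const_mul (α i))
  have ha' : a' * (z - x) ≤ 0 := by
    linarith [sum_mul_add_mul_sub_le hα'.1 hconv hd z, hzmin x]
  have hsign : a * a' ≤ 0 := by
    nlinarith [mul_nonpos_of_nonneg_of_nonpos ha ha', sq_pos_of_ne_zero (sub_ne_zero.2 hzx)]
  obtain ⟨v, hv, hv_zero⟩ := hα.exists_sum_mul_eq_zero hα' hβ hsign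
  exact ⟨v, hv, fun y => by simpa [hv_zero] using sum_mul_add_mul_sub_le hv.1 hconv hd y⟩

/-- Case 3 of Lemma (convex B cons): if `X(β,γ)` intersects the constraint set
`𝒳`, then `Y(β,γ) = X(β,γ) ∩ 𝒳`. -/
theorem YSet_eq_XSet_inter {ι : Type*} (L : ℝ) (hL : 0 < L)
    (N : Finset ι) (hNne : N.Nonempty) (m : ℕ) (hm : N.card = m)
    (h : ι → ℝ → ℝ) (hadm : ∀ i ∈ N, Admissible L (h i))
    (X : Set ℝ) (hXne : X.Nonempty) (hXcl : IsClosed X) (hXconv : Convex ℝ X)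
    (β : ℝ) (hβ : β ≤ 1 / (m : ℝ)) (γ : ℕ) (hγ : γ ≤ m)
    (hint : (XSet N h β γ ∩ X).Nonempty) :
    YSet N h X β γ = XSet N h β γ ∩ X :=
  YSet_eq_XSet_inter_general L N m hm h hadm X hXconv β hβ γ hint
end

section
/- Let A be a real square matrix indexed by a finite type ι and let S be a nonempty finite subset of ι such that A_{αβ} ≥ 0 for all α, β ∈ S and ∑_{β∈S} A_{αβ} = 1 for every α ∈ S. Then δ_S(A) ≤ 1 − η_S(A). -/
/-- `δ_S(A) = max_{β∈S} max_{α,α'∈S} |A_{αβ} − A_{α'β}|`. -/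
noncomputable def deltaS {ι : Type*} [Fintype ι] (S : Finset ι) (hS : S.Nonempty)
    (A : Matrix ι ι ℝ) : ℝ :=
  S.sup' hS fun β => S.sup' hS fun α => S.sup' hS fun α' => |A α β - A α' β|

/-- `η_S(A) = min_{α,α'∈S} ∑_{β∈S} min(A_{αβ}, A_{α'β})`. -/
noncomputable def etaS {ι : Type*} [Fintype ι] (S : Finset ι) (hS : S.Nonempty)
    (A : Matrix ι ι ℝ) : ℝ :=
  S.inf' hS fun α => S.inf' hS fun α' => ∑ β ∈ S, min (A α β) (A α' β)

/-- Lemma (crash erdoc c1): for a matrix whose `S`-block is nonnegative with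
rows summing to `1`, one has `δ_S(A) ≤ 1 − η_S(A)`. -/
theorem deltaS_le_one_sub_etaS {ι : Type*} [Fintype ι]
    (A : Matrix ι ι ℝ) (S : Finset ι) (hS : S.Nonempty)
    (hnn : ∀ α ∈ S, ∀ β ∈ S, 0 ≤ A α β)
    (hrow : ∀ α ∈ S, ∑ β ∈ S, A α β = 1) :
    deltaS S hS A ≤ 1 - etaS S hS A := by
  have key : ∀ α ∈ S, ∀ α' ∈ S, ∀ β ∈ S,
      A α β - A α' β ≤ 1 - etaS S hS A := by
    intro α hα α' hα' β hβ
    have heta : etaS S hS A ≤ ∑ γ ∈ S, min (A α γ) (A α' γ) := by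
      exact le_trans
        (Finset.inf'_le (fun a => S.inf' hS fun a' => ∑ β ∈ S, min (A a β) (A a' β)) hα)
        (Finset.inf'_le (fun a' => ∑ β ∈ S, min (A α β) (A a' β)) hα')
    have h1 : A α β - A α' β ≤ A α β - min (A α β) (A α' β) := by
      have := min_le_right (A α β) (A α' β); linarith
    have h2 : A α β - min (A α β) (A α' β)
        ≤ ∑ γ ∈ S, (A α γ - min (A α γ) (A α' γ)) := by
      exact Finset.single_le_sum (f := fun γ => A α γ - min (A α γ) (A α' γ))
        (fun γ _ => by simpa using sub_nonneg.2 (min_le_left (A α γ) (A α' γ))) hβ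
    have h3 : ∑ γ ∈ S, (A α γ - min (A α γ) (A α' γ))
        = 1 - ∑ γ ∈ S, min (A α γ) (A α' γ) := by
      rw [Finset.sum_sub_distrib, hrow α hα]
    linarith
  apply Finset.sup'_le; intro β hβ
  apply Finset.sup'_le; intro α hα
  apply Finset.sup'_le; intro α' hα'
  rw [abs_sub_le_iff]
  exact ⟨key α hα α' hα' β hβ, key α' hα' α hα β hβ⟩
end

section
/- Let A and B be real square matrices indexed by a finite type ι and let S be a nonempty finite subset of ι such that for every α ∈ S: A_{αk} ≥ 0 for all k, ∑_{k∈S} A_{αk} = 1, and A_{αk} = 0 for every k ∉ S. Then δ_S(A·B) ≤ (1 − η_S(A)) · δ_S(B), where A·B denotes the matrix product. -/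
lemma key_step {ι : Type*} [Fintype ι]
    (A B : Matrix ι ι ℝ) (S : Finset ι) (hS : S.Nonempty)
    (hnn : ∀ α ∈ S, ∀ k : ι, 0 ≤ A α k)
    (hrow : ∀ α ∈ S, ∑ k ∈ S, A α k = 1)
    (hzero : ∀ α ∈ S, ∀ k : ι, k ∉ S → A α k = 0)
    {α α' β : ι} (hα : α ∈ S) (hα' : α' ∈ S) (hβ : β ∈ S) :
    (A * B) α β - (A * B) α' β ≤ (1 - etaS S hS A) * deltaS S hS B := by
  set m : ι → ℝ := fun k => min (A α k) (A α' k) with hm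
  set c : ℝ := 1 - ∑ k ∈ S, m k with hc
  set M : ℝ := S.sup' hS (fun k => B k β) with hM
  set L : ℝ := S.inf' hS (fun k => B k β) with hL
  have hAB : ∀ γ ∈ S, (A * B) γ β = ∑ k ∈ S, A γ k * B k β := by
    intro γ hγ
    rw [Matrix.mul_apply]
    exact (Finset.sum_subset S.subset_univ
      (fun k _ hk => by rw [hzero γ hγ k hk, zero_mul])).symm
  have hsum1 : ∑ k ∈ S, (A α k - m k) = c := by
    rw [Finset.sum_sub_distrib, hrow α hα]
  have hsum2 : ∑ k ∈ S, (A α' k - m k) = c := by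
    rw [Finset.sum_sub_distrib, hrow α' hα']
  have hupper : ∑ k ∈ S, (A α k - m k) * B k β ≤ c * M := by
    rw [← hsum1, Finset.sum_mul]
    refine Finset.sum_le_sum fun k hk => ?_
    exact mul_le_mul_of_nonneg_left (Finset.le_sup' (fun k => B k β) hk)
      (sub_nonneg.2 (min_le_left _ _))
  have hlower : c * L ≤ ∑ k ∈ S, (A α' k - m k) * B k β := by
    rw [← hsum2, Finset.sum_mul]
    refine Finset.sum_le_sum fun k hk => ?_
    exact mul_le_mul_of_nonneg_left (Finset.inf'_le (fun k => B k β) hk)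
      (sub_nonneg.2 (min_le_right _ _))
  have hd : (A * B) α β - (A * B) α' β ≤ c * (M - L) := by
    rw [hAB α hα, hAB α' hα', mul_sub]
    have heq : ∑ k ∈ S, A α k * B k β - ∑ k ∈ S, A α' k * B k β
        = (∑ k ∈ S, (A α k - m k) * B k β) - ∑ k ∈ S, (A α' k - m k) * B k β := by
      rw [← Finset.sum_sub_distrib, ← Finset.sum_sub_distrib]
      exact Finset.sum_congr rfl fun k _ => by ring
    rw [heq]
    exact sub_le_sub hupper hlower
  have hc0 : 0 ≤ c := by
    have h1 : ∑ k ∈ S, m k ≤ 1 := by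
      rw [← hrow α hα]
      exact Finset.sum_le_sum fun k _ => min_le_left _ _
    simp only [hc]; linarith
  have hcη : c ≤ 1 - etaS S hS A := by
    have h1 : etaS S hS A ≤ ∑ k ∈ S, m k := by
      refine le_trans (Finset.inf'_le _ hα) (Finset.inf'_le _ hα')
    simp only [hc]; linarith
  have hML : M - L ≤ deltaS S hS B := by
    obtain ⟨k, hk, hkM⟩ := Finset.exists_mem_eq_sup' hS (fun k => B k β)
    obtain ⟨k', hk', hk'L⟩ := Finset.exists_mem_eq_inf' hS (fun k => B k β)
    calc M - L = B k β - B k' β := by rw [hM, hL, hkM, hk'L]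
      _ ≤ |B k β - B k' β| := le_abs_self _
      _ ≤ deltaS S hS B := by
          refine le_trans (Finset.le_sup' (fun a' => |B k β - B a' β|) hk') ?_
          refine le_trans (Finset.le_sup'
            (fun a => S.sup' hS fun a' => |B a β - B a' β|) hk) ?_
          exact Finset.le_sup'
            (fun b => S.sup' hS fun a => S.sup' hS fun a' => |B a b - B a' b|) hβ
  have hML0 : 0 ≤ M - L := by
    obtain ⟨x, hx⟩ := hS
    have := Finset.inf'_le (fun k => B k β) hx
    have := Finset.le_sup' (fun k => B k β) hx
    linarith
  exact hd.trans (mul_le_mul hcη hML hML0 (hc0.trans hcη))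

/-- Lemma (crash erdoc c2): if the rows of `A` indexed by `S` are nonnegative,
sum to `1` over `S`, and vanish outside `S`, then
`δ_S(A·B) ≤ (1 − η_S(A))·δ_S(B)`. -/
theorem deltaS_mul_le {ι : Type*} [Fintype ι]
    (A B : Matrix ι ι ℝ) (S : Finset ι) (hS : S.Nonempty)
    (hnn : ∀ α ∈ S, ∀ k : ι, 0 ≤ A α k)
    (hrow : ∀ α ∈ S, ∑ k ∈ S, A α k = 1)
    (hzero : ∀ α ∈ S, ∀ k : ι, k ∉ S → A α k = 0) :
    deltaS S hS (A * B) ≤ (1 - etaS S hS A) * deltaS S hS B := by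
  rw [deltaS]
  refine Finset.sup'_le _ _ fun β hβ => Finset.sup'_le _ _ fun α hα =>
    Finset.sup'_le _ _ fun α' hα' => abs_sub_le_iff.2 ⟨?_, ?_⟩
  · exact key_step A B S hS hnn hrow hzero hα hα' hβ
  · exact key_step A B S hS hnn hrow hzero hα' hα hβ
end

section
/- Let ι be a finite index type, let N : ℕ → Finset ι be an antitone family of index sets (i.e., N(s+1) ⊆ N(s) for all s), and let P : ℕ → Matrix ι ι ℝ be a family of matrices such that for every s and all indices i ≠ k with k ∉ N(s), one has P(s)_{ik} = 0. For t' ≥ t define the backward product Ψ(t',t) = P(t')·P(t'−1)⋯P(t). Then for every t ≥ 1, every t' ≥ t, every i ∈ N(t), and every j ∉ N(t), one has Ψ(t',t)_{ij} = 0. -/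
/-- The backward product `Ψ(t+k, t) = P(t+k)·P(t+k−1)⋯P(t)`, parameterized by
the start index `t` and the number of extra factors `k` (so `t' = t + k ≥ t`). -/
def Psi {ι : Type*} [Fintype ι] (P : ℕ → Matrix ι ι ℝ) (t : ℕ) : ℕ → Matrix ι ι ℝ
  | 0 => P t
  | k + 1 => P (t + k + 1) * Psi P t k

lemma N_sub {ι : Type*} (N : ℕ → Finset ι) (hN : ∀ s : ℕ, N (s + 1) ⊆ N s)
    (t k : ℕ) : N (t + k) ⊆ N t := by
  induction k with
  | zero => simp
  | succ k ih => exact fun x hx => ih (hN (t + k) hx)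

lemma Psi_aux {ι : Type*} [Fintype ι]
    (N : ℕ → Finset ι) (hN : ∀ s : ℕ, N (s + 1) ⊆ N s)
    (P : ℕ → Matrix ι ι ℝ)
    (hP : ∀ s : ℕ, ∀ i k : ι, i ≠ k → k ∉ N s → P s i k = 0)
    (t : ℕ) (k : ℕ) (j : ι) (hj : j ∉ N t) :
    ∀ i ∈ N t, Psi P t k i j = 0 := by
  induction k with
  | zero =>
    intro i hi
    exact hP t i j (fun h => hj (h ▸ hi)) hj
  | succ k ih =>
    intro i hi
    show (P (t + k + 1) * Psi P t k) i j = 0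
    rw [Matrix.mul_apply]
    refine Finset.sum_eq_zero fun m _ => ?_
    by_cases hm : m ∈ N t
    · rw [ih m hm, mul_zero]
    · have : m ∉ N (t + k + 1) := fun h => hm (N_sub N hN t (k + 1) h)
      rw [hP (t + k + 1) i m (fun h => hm (h ▸ hi)) this, zero_mul]

/-- Proposition (p3): crashed agents cannot influence surviving agents.  If
`N : ℕ → Finset ι` is an antitone family of "alive" index sets and each `P(s)`
satisfies `P(s)_{ik} = 0` whenever `i ≠ k` and `k ∉ N(s)`, then for every
`t ≥ 1`, every `t' = t + k ≥ t`, every `i ∈ N(t)` and every `j ∉ N(t)`, the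
backward product satisfies `Ψ(t',t)_{ij} = 0`. -/
theorem Psi_entry_eq_zero_of_crashed {ι : Type*} [Fintype ι]
    (N : ℕ → Finset ι) (hN : ∀ s : ℕ, N (s + 1) ⊆ N s)
    (P : ℕ → Matrix ι ι ℝ)
    (hP : ∀ s : ℕ, ∀ i k : ι, i ≠ k → k ∉ N s → P s i k = 0)
    (t : ℕ) (ht : 1 ≤ t) (k : ℕ) (i j : ι) (hi : i ∈ N t) (hj : j ∉ N t) :
    Psi P t k i j = 0 :=
  Psi_aux N hN P hP t k j hj i hi
end

section
/- Let θ be a real number with 0 ≤ θ < 1, let ν ≥ 1 be a natural number, and let λ : ℕ → ℝ be a sequence with λ_t ≥ 0 for all t and λ_t → 0 as t → ∞. Then the sequence t ↦ ∑_{r=0}^{t} λ_r · θ^{⌈(t−r)/ν⌉} converges to 0 as t → ∞. -/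
/-!
Write `ρ = θ ^ (1 / ν) < 1`. Since `(t - r) / ν ≤ ⌈(t - r) / ν⌉`, each weight `θ ^ ⌈(t - r) / ν⌉` is
at most `ρ ^ (t - r)`, so the sums are dominated by the convolution of the null sequence `|λ|`
with the summable sequence `ρ ^ n`. Reindexing the convolution as `∑' j, λ (t - j) ρ ^ j` (cut off
at `j = t`), Tannery's theorem with the dominating sequence `(sup |λ|) ρ ^ j` shows it tends to `0`.
-/

open Filter Finset Topology

theorem tendsto_sum_range_mul_sub {R : Type*} [NormedRing R] [CompleteSpace R] {f g : ℕ → R}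
    (hf : Tendsto f atTop (𝓝 0)) (hg : Summable (‖g ·‖)) :
    Tendsto (fun t ↦ ∑ r ∈ range (t + 1), f r * g (t - r)) atTop (𝓝 0) := by
  obtain ⟨C, hC⟩ := hf.norm.bddAbove_range
  replace hC : ∀ n, ‖f n‖ ≤ C := Set.forall_mem_range.mp hC
  let F : ℕ → ℕ → R := fun t j ↦ if j ≤ t then f (t - j) * g j else 0
  have h_tsum (t : ℕ) : ∑ r ∈ range (t + 1), f r * g (t - r) = ∑' j, F t j := by
    rw [tsum_eq_sum (s := range (t + 1)) fun j hj ↦ if_neg (by simpa [Nat.lt_succ_iff] using hj),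
      ← sum_range_reflect]
    refine sum_congr rfl fun j hj ↦ ?_
    have hjt : j ≤ t := Nat.lt_succ_iff.mp (mem_range.mp hj)
    simp only [if_pos hjt, Nat.add_sub_cancel, Nat.sub_sub_self hjt]
  have h_lim (j : ℕ) : Tendsto (F · j) atTop (𝓝 0) := by
    have : Tendsto (fun t ↦ f (t - j) * g j) atTop (𝓝 0) := by
      simpa using ((hf.comp (tendsto_sub_atTop_nat j)).mul_const (g j))
    refine this.congr' ?_
    filter_upwards [eventually_ge_atTop j] with t ht
    simp only [F, if_pos ht]
  have h_bound : ∀ᶠ t in atTop, ∀ j, ‖F t j‖ ≤ C * ‖g j‖ := by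
    refine .of_forall fun t j ↦ ?_
    by_cases hjt : j ≤ t
    · simp only [F, if_pos hjt]
      exact (norm_mul_le _ _).trans (mul_le_mul_of_nonneg_right (hC _) (norm_nonneg _))
    · simpa [F, hjt] using mul_nonneg ((norm_nonneg _).trans (hC 0)) (norm_nonneg (g j))
  simpa [h_tsum] using tendsto_tsum_of_dominated_convergence (hg.mul_left C) h_lim h_bound

theorem zpow_ceil_le_rpow {θ : ℝ} (hθ0 : 0 ≤ θ) (hθ1 : θ ≤ 1) {q : ℚ} (hq : 0 ≤ q) :
    θ ^ ⌈q⌉ ≤ θ ^ (q : ℝ) := by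
  rw [← Real.rpow_intCast]
  exact Real.rpow_le_rpow_of_exponent_ge' hθ0 hθ1 (by exact_mod_cast hq)
    (by exact_mod_cast Int.le_ceil q)

theorem zpow_ceil_natCast_div_le_pow {θ : ℝ} (hθ0 : 0 ≤ θ) (hθ1 : θ ≤ 1) (k ν : ℕ) :
    θ ^ ⌈(k : ℚ) / ν⌉ ≤ (θ ^ (ν : ℝ)⁻¹) ^ k := by
  calc θ ^ ⌈(k : ℚ) / ν⌉ ≤ θ ^ (((k : ℚ) / ν : ℚ) : ℝ) := zpow_ceil_le_rpow hθ0 hθ1 (by positivity)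
    _ = (θ ^ (ν : ℝ)⁻¹) ^ k := by
      rw [← Real.rpow_natCast, ← Real.rpow_mul hθ0]
      push_cast
      ring_nf

theorem tendsto_sum_stepsize_geometric_general
    (θ : ℝ) (hθ0 : 0 ≤ θ) (hθ1 : θ < 1) (ν : ℕ) (hν : 1 ≤ ν)
    (lam : ℕ → ℝ)
    (hlim : Filter.Tendsto lam Filter.atTop (nhds 0)) :
    Filter.Tendsto
      (fun t : ℕ => ∑ r ∈ Finset.range (t + 1),
        lam r * θ ^ ⌈((t : ℚ) - (r : ℚ)) / (ν : ℚ)⌉)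
      Filter.atTop (nhds 0) := by
  set ρ := θ ^ (ν : ℝ)⁻¹
  have hρ0 : 0 ≤ ρ := Real.rpow_nonneg hθ0 _
  have hρ1 : ρ < 1 := Real.rpow_lt_one hθ0 hθ1 (by positivity)
  have h_dom : Tendsto (fun t ↦ ∑ r ∈ range (t + 1), |lam r| * ρ ^ (t - r)) atTop (𝓝 0) :=
    tendsto_sum_range_mul_sub (by simpa using hlim.abs)
      (by simpa [abs_of_nonneg hρ0] using summable_geometric_of_lt_one hρ0 hρ1)
  refine squeeze_zero_norm (fun t ↦ (norm_sum_le _ _).trans (sum_le_sum fun r hr ↦ ?_)) h_dom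
  have hrt : r ≤ t := Nat.lt_succ_iff.mp (mem_range.mp hr)
  rw [norm_mul, Real.norm_eq_abs, norm_zpow, Real.norm_of_nonneg hθ0, ← Nat.cast_sub hrt]
  gcongr
  exact zpow_ceil_natCast_div_le_pow hθ0 hθ1.le _ _

/-- If `0 ≤ θ < 1`, `ν ≥ 1`, and `λ_t ≥ 0` with `λ_t → 0`, then the weighted
sums `∑_{r=0}^{t} λ_r·θ^{⌈(t−r)/ν⌉}` tend to `0` as `t → ∞`. -/
theorem tendsto_sum_stepsize_geometric
    (θ : ℝ) (hθ0 : 0 ≤ θ) (hθ1 : θ < 1) (ν : ℕ) (hν : 1 ≤ ν)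
    (lam : ℕ → ℝ) (hnn : ∀ t : ℕ, 0 ≤ lam t)
    (hlim : Filter.Tendsto lam Filter.atTop (nhds 0)) :
    Filter.Tendsto
      (fun t : ℕ => ∑ r ∈ Finset.range (t + 1),
        lam r * θ ^ ⌈((t : ℚ) - (r : ℚ)) / (ν : ℚ)⌉)
      Filter.atTop (nhds 0) :=
  tendsto_sum_stepsize_geometric_general θ hθ0 hθ1 ν hν lam hlim
end
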